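/- Let m ≥ 1 and k be natural numbers, let D be a probability mass function on the set of bit strings {0,1}^m with Shannon entropy (in bits) H(D) ≥ h, let g : {0,1}^k → {0,1}^m be any function, and let A be the pushforward under g of the uniform distribution on {0,1}^k. Then the total variation distance satisfies Δ(A, D) ≥ (h − k − 1)/m. -/

import Mathlib

/-!
Write `η(x) = -x log₂ x`, and split `D = min D A + s`, `A = min D A + t`, where `s` and `t` both
have mass `Δ = Δ(A, D)`. By subadditivity of `η`, `H(D)` is at most the entropy of the common part
`min D A` plus that of `s`. Jensen's inequality bounds the entropy of `s` by `Δ m + η(Δ)`, and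
concavity bounds that of the common part by `H(A) + η(1 - Δ)`. Since `η(Δ) + η(1 - Δ) ≤ 1` and a
pushforward of the uniform distribution on `{0,1}^k` has entropy at most `k`, this gives
`H(D) ≤ k + Δ m + 1`.
-/

open Real Finset

namespace Real

lemma negMulLog_add_le {a b : ℝ} (ha : 0 ≤ a) (hb : 0 ≤ b) :
    negMulLog (a + b) ≤ negMulLog a + negMulLog b := by
  rcases ha.eq_or_lt with rfl | ha
  · simp
  rcases hb.eq_or_lt with rfl | hb
  · simp
  have hla := mul_le_mul_of_nonneg_left (log_le_log ha (by linarith : a ≤ a + b)) ha.le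
  have hlb := mul_le_mul_of_nonneg_left (log_le_log hb (by linarith : b ≤ a + b)) hb.le
  simp only [negMulLog]
  linarith

lemma negMulLog_sum_le {ι : Type*} (s : Finset ι) {p : ι → ℝ} (hp : ∀ i ∈ s, 0 ≤ p i) :
    negMulLog (∑ i ∈ s, p i) ≤ ∑ i ∈ s, negMulLog (p i) :=
  le_sum_of_subadditive_on_pred negMulLog (0 ≤ ·) negMulLog_zero.le
    (fun _ _ => negMulLog_add_le) (fun _ _ => add_nonneg) p hp

lemma negMulLog_le_negMulLog_add_sub_mul_log {r t c : ℝ} (hr : 0 ≤ r) (ht : 0 ≤ t)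
    (hrc : r ≤ c) (htc : t ≤ 1 - c) :
    negMulLog r ≤ negMulLog (r + t) - r * log c := by
  rcases (hr.trans hrc).eq_or_lt with rfl | hc
  · obtain rfl : r = 0 := le_antisymm hrc hr
    simpa using negMulLog_nonneg ht (by linarith)
  have hr_eq : c * (r / c) = r := mul_div_cancel₀ r hc.ne'
  have ht_eq : (1 - c) * (t / (1 - c)) = t := by
    rcases eq_or_ne (1 - c) 0 with h | h
    · rw [h, zero_mul]; linarith
    · exact mul_div_cancel₀ t h
  -- `r + t` is the convex combination `c • (r / c) + (1 - c) • (t / (1 - c))`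
  have hconc := concaveOn_negMulLog.2 (show r / c ∈ Set.Ici 0 from div_nonneg hr hc.le)
    (show t / (1 - c) ∈ Set.Ici 0 from div_nonneg ht (by linarith)) hc.le
    (show 0 ≤ 1 - c by linarith) (add_sub_cancel c 1)
  simp only [smul_eq_mul, hr_eq, ht_eq] at hconc
  have ht_term : 0 ≤ (1 - c) * negMulLog (t / (1 - c)) := mul_nonneg (by linarith)
    (negMulLog_nonneg (div_nonneg ht (by linarith)) (div_le_one_of_le₀ htc (by linarith)))
  have hr_scale : negMulLog r = c * negMulLog (r / c) - r * log c := by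
    conv_lhs => rw [← hr_eq, negMulLog_mul, negMulLog]
    field_simp
    ring
  linarith

end Real

section Entropy

variable {α β : Type*} [Fintype α] [Fintype β]

lemma sum_negMulLog_le_negMulLog_sum_add_mul_log_card {s : α → ℝ} (hs : ∀ x, 0 ≤ s x) :
    ∑ x, negMulLog (s x) ≤ negMulLog (∑ x, s x) + (∑ x, s x) * log (Fintype.card α) := by
  rcases isEmpty_or_nonempty α with hα | hα
  · simp
  set n : ℝ := (Fintype.card α : ℝ)
  have hn : 0 < n := by positivity
  have hjensen := concaveOn_negMulLog.le_map_sum (t := univ) (w := fun _ => n⁻¹) (p := s)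
    (fun _ _ => by positivity) (by simp [n, hn.ne']) (fun x _ => hs x)
  rw [← smul_sum, ← smul_sum, smul_eq_mul, smul_eq_mul, negMulLog_mul] at hjensen
  calc ∑ x, negMulLog (s x) = n * (n⁻¹ * ∑ x, negMulLog (s x)) := by field_simp
    _ ≤ n * ((∑ x, s x) * negMulLog n⁻¹ + n⁻¹ * negMulLog (∑ x, s x)) :=
      mul_le_mul_of_nonneg_left hjensen hn.le
    _ = negMulLog (∑ x, s x) + (∑ x, s x) * log n := by
      rw [negMulLog, log_inv]
      field_simp
      ring

lemma sum_negMulLog_le_sum_negMulLog_add {r t : α → ℝ} (hr : ∀ x, 0 ≤ r x)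
    (ht : ∀ x, 0 ≤ t x) (hrt : ∑ x, (r x + t x) = 1) :
    ∑ x, negMulLog (r x) ≤ ∑ x, negMulLog (r x + t x) + negMulLog (∑ x, r x) := by
  set c := ∑ x, r x
  have ht_sum : ∑ x, t x = 1 - c := by rw [sum_add_distrib] at hrt; linarith
  have key (x : α) : negMulLog (r x) ≤ negMulLog (r x + t x) - r x * log c :=
    negMulLog_le_negMulLog_add_sub_mul_log (hr x) (ht x)
      (single_le_sum (fun y _ => hr y) (mem_univ x))
      (ht_sum ▸ single_le_sum (fun y _ => ht y) (mem_univ x))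
  calc ∑ x, negMulLog (r x) ≤ ∑ x, (negMulLog (r x + t x) - r x * log c) :=
        sum_le_sum fun x _ => key x
    _ = ∑ x, negMulLog (r x + t x) + negMulLog c := by
        rw [sum_sub_distrib, ← sum_mul, negMulLog]
        ring

lemma sum_negMulLog_sum_fiber_le [DecidableEq α] (f : β → α) {p : β → ℝ} (hp : ∀ x, 0 ≤ p x) :
    ∑ y, negMulLog (∑ x with f x = y, p x) ≤ ∑ x, negMulLog (p x) :=
  calc ∑ y, negMulLog (∑ x with f x = y, p x)
      ≤ ∑ y, ∑ x with f x = y, negMulLog (p x) :=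
        sum_le_sum fun _ _ => negMulLog_sum_le _ fun x _ => hp x
    _ = ∑ x, negMulLog (p x) := sum_fiberwise _ _ _

lemma sum_card_fiber_div_card [DecidableEq α] [Nonempty β] (f : β → α) :
    ∑ y, (#{x | f x = y} : ℝ) / Fintype.card β = 1 := by
  rw [← sum_div, ← Nat.cast_sum, ← card_eq_sum_card_fiberwise fun x _ => mem_univ (f x),
    card_univ, div_self (by positivity)]

lemma sum_negMulLog_card_fiber_div_le [DecidableEq α] (f : β → α) :
    ∑ y, negMulLog (#{x | f x = y} / Fintype.card β) ≤ log (Fintype.card β) := by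
  have hfiber (y : α) :
      (#{x | f x = y} : ℝ) / Fintype.card β = ∑ x with f x = y, (Fintype.card β : ℝ)⁻¹ := by
    rw [sum_const, nsmul_eq_mul, div_eq_mul_inv]
  simp only [hfiber]
  refine (sum_negMulLog_sum_fiber_le f fun _ => by positivity).trans_eq ?_
  rw [sum_const, card_univ, nsmul_eq_mul, negMulLog, log_inv]
  rcases eq_or_ne (Fintype.card β : ℝ) 0 with hn | hn
  · simp [hn]
  · field_simp

lemma sum_filter_pos_neg_mul_logb {p : α → ℝ} (hp : ∀ x, 0 ≤ p x) (b : ℝ) :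
    ∑ x with 0 < p x, -(p x * logb b (p x)) = (∑ x, negMulLog (p x)) / log b := by
  rw [sum_filter, sum_div]
  refine sum_congr rfl fun x _ => ?_
  split_ifs with hx
  · rw [logb, negMulLog]
    ring
  · simp [le_antisymm (not_lt.1 hx) (hp x)]

noncomputable def tvDist (p q : α → ℝ) : ℝ := (1 / 2) * ∑ x, |p x - q x|

lemma sum_sub_min_eq_tvDist {p q : α → ℝ} (hpq : ∑ x, p x = ∑ x, q x) :
    ∑ x, (p x - min (p x) (q x)) = tvDist q p := by
  have (x : α) : p x - min (p x) (q x) = (p x - q x + |q x - p x|) / 2 := by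
    linarith [min_add_max (p x) (q x), max_sub_min_eq_abs (p x) (q x)]
  simp only [this, ← sum_div, sum_add_distrib, sum_sub_distrib, hpq, tvDist]
  ring

theorem sum_negMulLog_le_add_tvDist {p q : α → ℝ} (hp : ∀ x, 0 ≤ p x) (hq : ∀ x, 0 ≤ q x)
    (hp1 : ∑ x, p x = 1) (hq1 : ∑ x, q x = 1) :
    ∑ x, negMulLog (p x) ≤
      ∑ x, negMulLog (q x) + tvDist q p * log (Fintype.card α) + binEntropy (tvDist q p) := by
  set δ := tvDist q p
  have hs_sum : ∑ x, (p x - min (p x) (q x)) = δ := sum_sub_min_eq_tvDist (hp1.trans hq1.symm)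
  have hr_sum : ∑ x, min (p x) (q x) = 1 - δ := by
    rw [sum_sub_distrib, hp1] at hs_sum
    linarith
  calc ∑ x, negMulLog (p x)
      = ∑ x, negMulLog (min (p x) (q x) + (p x - min (p x) (q x))) := by simp
    _ ≤ ∑ x, negMulLog (min (p x) (q x)) + ∑ x, negMulLog (p x - min (p x) (q x)) := by
      rw [← sum_add_distrib]
      exact sum_le_sum fun x _ =>
        negMulLog_add_le (le_min (hp x) (hq x)) (sub_nonneg.2 (min_le_left _ _))
    _ ≤ (∑ x, negMulLog (min (p x) (q x) + (q x - min (p x) (q x))) +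
          negMulLog (∑ x, min (p x) (q x))) +
        (negMulLog (∑ x, (p x - min (p x) (q x))) +
          (∑ x, (p x - min (p x) (q x))) * log (Fintype.card α)) := by
      gcongr
      · exact sum_negMulLog_le_sum_negMulLog_add (fun x => le_min (hp x) (hq x))
          (fun x => sub_nonneg.2 (min_le_right _ _)) (by simpa using hq1)
      · exact sum_negMulLog_le_negMulLog_sum_add_mul_log_card fun x => sub_nonneg.2 (min_le_left _ _)
    _ = ∑ x, negMulLog (q x) + δ * log (Fintype.card α) + binEntropy δ := by
      simp only [add_sub_cancel, hr_sum, hs_sum, binEntropy_eq_negMulLog_add_negMulLog_one_sub]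
      ring

end Entropy

theorem tv_dist_pushforward_uniform_ge_general (m k : ℕ)
    (D : (Fin m → Bool) → ℝ)
    (hD0 : ∀ x, 0 ≤ D x) (hD1 : ∑ x, D x = 1)
    (h : ℝ)
    (hH : h ≤ ∑ x ∈ Finset.univ.filter (fun x => 0 < D x),
        -(D x * Real.logb 2 (D x)))
    (g : (Fin k → Bool) → (Fin m → Bool))
    (A : (Fin m → Bool) → ℝ)
    (hA : ∀ y, A y =
        ((Finset.univ.filter (fun r => g r = y)).card : ℝ) / (2 : ℝ) ^ k) :
    (h - (k : ℝ) - 1) / (m : ℝ) ≤ (1 / 2) * ∑ y, |A y - D y| := by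
  have hcard (n : ℕ) : (Fintype.card (Fin n → Bool) : ℝ) = 2 ^ n := by simp
  have hA' (y) : A y = #{r | g r = y} / Fintype.card (Fin k → Bool) := by rw [hA, hcard]
  have hA0 (y) : 0 ≤ A y := by rw [hA]; positivity
  have hA1 : ∑ y, A y = 1 := by simpa only [hA'] using sum_card_fiber_div_card g
  have hHA : ∑ y, negMulLog (A y) ≤ k * log 2 := by
    simpa only [hA', hcard, log_pow] using sum_negMulLog_card_fiber_div_le g
  have hHD : h * log 2 ≤ ∑ x, negMulLog (D x) := by
    rwa [sum_filter_pos_neg_mul_logb hD0, le_div_iff₀ (log_pos one_lt_two)] at hH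
  have hfannes := sum_negMulLog_le_add_tvDist hD0 hA0 hD1 hA1
  rw [hcard, log_pow] at hfannes
  have hbits : h ≤ k + tvDist A D * m + 1 := by
    refine le_of_mul_le_mul_right ?_ (log_pos one_lt_two)
    linarith [binEntropy_le_log_two (p := tvDist A D)]
  exact div_le_of_le_mul₀ m.cast_nonneg (by positivity) (by rw [tvDist] at hbits; linarith)

/-- Let `D` be a PMF on `{0,1}^m` (`m ≥ 1`) with Shannon entropy (in bits) at least `h`,
let `g : {0,1}^k → {0,1}^m` be any function, and let `A` be the pushforward under `g`
of the uniform distribution on `{0,1}^k`. Then the total variation distance satisfies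
`Δ(A, D) ≥ (h - k - 1) / m`. -/
theorem tv_dist_pushforward_uniform_ge (m k : ℕ) (hm : 1 ≤ m)
    (D : (Fin m → Bool) → ℝ)
    (hD0 : ∀ x, 0 ≤ D x) (hD1 : ∑ x, D x = 1)
    (h : ℝ)
    (hH : h ≤ ∑ x ∈ Finset.univ.filter (fun x => 0 < D x),
        -(D x * Real.logb 2 (D x)))
    (g : (Fin k → Bool) → (Fin m → Bool))
    (A : (Fin m → Bool) → ℝ)
    (hA : ∀ y, A y =
        ((Finset.univ.filter (fun r => g r = y)).card : ℝ) / (2 : ℝ) ^ k) :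
    (h - (k : ℝ) - 1) / (m : ℝ) ≤ (1 / 2) * ∑ y, |A y - D y| :=
  tv_dist_pushforward_uniform_ge_general m k D hD0 hD1 h hH g A hA
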